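/- Let G be an F-adapted process with E[|G_t L_t|] < ∞ for all t, where L is the density process of P̂ with respect to P restricted to F_t. Then the (F^S, P̂)-predictable projection of G satisfies the Kallianpur–Striebel-type formula: p̂,F^S G_t = p,F^S(G_t L_t) / p,F^S(L_t) for all t ∈ [0,T], where p,F^S denotes predictable projection under P. -/

import Mathlib

open MeasureTheory ProbabilityTheory Filter Set
open scoped ENNReal NNReal

noncomputable section

variable {Ω : Type*} [m0 : MeasurableSpace Ω]

/-- The predictable σ-algebra on `ℝ × Ω` associated with a filtration `ℱ`. -/
def predictableSigma (ℱ : Filtration ℝ m0) : MeasurableSpace (ℝ × Ω) :=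
  MeasurableSpace.generateFrom
    ({s | ∃ u v : ℝ, ∃ A : Set Ω, u ≤ v ∧ MeasurableSet[ℱ u] A ∧ s = Set.Ioc u v ×ˢ A} ∪
      {s | ∃ A : Set Ω, MeasurableSet[ℱ 0] A ∧ s = ({0} : Set ℝ) ×ˢ A})

/-- A process is `ℱ`-predictable if it is measurable w.r.t. the predictable σ-algebra. -/
def IsPredictable (ℱ : Filtration ℝ m0) (φ : ℝ → Ω → ℝ) : Prop :=
  Measurable[predictableSigma ℱ] fun p : ℝ × Ω => φ p.1 p.2

/-- Martingale property on the time interval `[0,T]`. -/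
def MartingaleOn (P : Measure Ω) (ℱ : Filtration ℝ m0) (T : ℝ) (M : ℝ → Ω → ℝ) : Prop :=
  (∀ t ∈ Set.Icc (0:ℝ) T, StronglyMeasurable[ℱ t] (M t) ∧ Integrable (M t) P) ∧
  ∀ s t : ℝ, 0 ≤ s → s ≤ t → t ≤ T → P[M t | ℱ s] =ᵐ[P] M s

/-- `W` is a Brownian motion w.r.t. `(ℱ, P)` on `[0,T]`. -/
def IsBMOn (P : Measure Ω) (ℱ : Filtration ℝ m0) (T : ℝ) (W : ℝ → Ω → ℝ) : Prop :=
  (∀ t ∈ Set.Icc (0:ℝ) T, StronglyMeasurable[ℱ t] (W t)) ∧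
  (∀ᵐ ω ∂P, W 0 ω = 0) ∧
  (∀ᵐ ω ∂P, ContinuousOn (fun t => W t ω) (Set.Icc 0 T)) ∧
  ∀ s t : ℝ, 0 ≤ s → s ≤ t → t ≤ T →
    Measure.map (fun ω => W t ω - W s ω) P = gaussianReal 0 (Real.toNNReal (t - s)) ∧
    Indep (MeasurableSpace.comap (fun ω => W t ω - W s ω) inferInstance) (ℱ s) P

/-- `W` is a Brownian motion on the stochastic interval `[0, τ ∧ T]` w.r.t. `(𝔾, P)`:
it coincides there with a genuine `(𝔾, P)`-Brownian motion. -/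
def IsBMOnStoppedInterval (P : Measure Ω) (𝔾 : Filtration ℝ m0) (T : ℝ) (τ : Ω → ℝ)
    (W : ℝ → Ω → ℝ) : Prop :=
  ∃ β : ℝ → Ω → ℝ, IsBMOn P 𝔾 T β ∧
    ∀ t ∈ Set.Icc (0:ℝ) T, ∀ᵐ ω ∂P, W (min t (τ ω)) ω = β (min t (τ ω)) ω

/-- `N` is (a version of) the stochastic integral `∫ φ dM` on `[0,T]`, where `M` is a
continuous `(ℱ,P)`-martingale whose quadratic variation has density `q`, i.e.
`⟨M⟩_t = ∫_0^t q_u du`.  The integral is characterized by: `N₀ = 0`, `N` adapted with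
continuous paths, `⟨N, M⟩_t = ∫_0^t φ_u q_u du` and `⟨N⟩_t = ∫_0^t φ_u² q_u du`,
the brackets being encoded through the associated martingale properties. -/
def IsStochInt (P : Measure Ω) (ℱ : Filtration ℝ m0) (T : ℝ) (φ M q N : ℝ → Ω → ℝ) : Prop :=
  (∀ᵐ ω ∂P, N 0 ω = 0) ∧
  (∀ t ∈ Set.Icc (0:ℝ) T, StronglyMeasurable[ℱ t] (N t)) ∧
  (∀ᵐ ω ∂P, ContinuousOn (fun t => N t ω) (Set.Icc 0 T)) ∧
  MartingaleOn P ℱ T (fun t ω => N t ω * M t ω - ∫ u in Set.Ioc (0:ℝ) t, φ u ω * q u ω) ∧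
  MartingaleOn P ℱ T (fun t ω => (N t ω) ^ 2 - ∫ u in Set.Ioc (0:ℝ) t, (φ u ω) ^ 2 * q u ω)

/-- Local martingale property on `[0,T]`. -/
def IsLocalMartOn (P : Measure Ω) (ℱ : Filtration ℝ m0) (T : ℝ) (X : ℝ → Ω → ℝ) : Prop :=
  ∃ τn : ℕ → Ω → ℝ, (∀ n, IsStoppingTime ℱ (fun ω => ((τn n ω : ℝ) : WithTop ℝ))) ∧
    (∀ᵐ ω ∂P, Tendsto (fun n => τn n ω) atTop atTop) ∧
    ∀ n, MartingaleOn P ℱ T fun t ω => X (min t (τn n ω)) ω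

/-- `Z` is the `(ℍ,P)`-optional projection of `Y`. -/
def IsOptProj (P : Measure Ω) (ℍ : Filtration ℝ m0) (Y Z : ℝ → Ω → ℝ) : Prop :=
  Adapted ℍ Z ∧
  ∀ (σ : Ω → ℝ) (hσ : IsStoppingTime ℍ (fun ω => ((σ ω : ℝ) : WithTop ℝ))),
    ∀ᵐ ω ∂P, Z (σ ω) ω = (P[fun ω' => Y (σ ω') ω' | hσ.measurableSpace]) ω

/-- A predictable (announceable) stopping time. -/
def IsPredStoppingTime (ℍ : Filtration ℝ m0) (σ : Ω → ℝ) : Prop :=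
  IsStoppingTime ℍ (fun ω => ((σ ω : ℝ) : WithTop ℝ)) ∧ ∃ σs : ℕ → Ω → ℝ, (∀ n, IsStoppingTime ℍ (fun ω => ((σs n ω : ℝ) : WithTop ℝ))) ∧
    (∀ n ω, σs n ω ≤ σs (n + 1) ω) ∧ (∀ n ω, 0 < σ ω → σs n ω < σ ω) ∧
    ∀ ω, Tendsto (fun n => σs n ω) atTop (nhds (σ ω))

/-- The σ-algebra of events strictly prior to a stopping time `σ`. -/
def sigmaPast (ℍ : Filtration ℝ m0) (σ : Ω → ℝ) : MeasurableSpace Ω :=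
  (ℍ 0 : MeasurableSpace Ω) ⊔ MeasurableSpace.generateFrom
    {s | ∃ t : ℝ, ∃ A : Set Ω, MeasurableSet[ℍ t] A ∧ s = A ∩ {ω | t < σ ω}}

/-- `Z` is the `(ℍ,P)`-predictable projection of `Y`. -/
def IsPredProj (P : Measure Ω) (ℍ : Filtration ℝ m0) (Y Z : ℝ → Ω → ℝ) : Prop :=
  IsPredictable ℍ Z ∧
  ∀ σ : Ω → ℝ, IsPredStoppingTime ℍ σ →
    ∀ᵐ ω ∂P, Z (σ ω) ω = (P[fun ω' => Y (σ ω') ω' | sigmaPast ℍ σ]) ω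

/-- The natural filtration (σ-algebra at time `t`) of the death indicator `H_t = 1_{τ ≤ t}`. -/
def deathSigma (τ : Ω → ℝ) (t : ℝ) : MeasurableSpace Ω :=
  MeasurableSpace.generateFrom {A : Set Ω | ∃ s : ℝ, s ≤ t ∧ A = {ω | τ ω ≤ s}}

lemma KS_isPredStoppingTime_const (ℍ : Filtration ℝ m0) (t : ℝ) :
    IsPredStoppingTime ℍ (fun _ => t) := by
  refine ⟨isStoppingTime_const ℍ t, fun n _ => t - 1/(n+1),
    fun n => isStoppingTime_const ℍ _, fun n ω => ?_, fun n ω _ => ?_, fun ω => ?_⟩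
  · have h1 : (1:ℝ)/((n:ℝ)+1+1) ≤ 1/((n:ℝ)+1) := by
      apply one_div_le_one_div_of_le
      · positivity
      · linarith
    push_cast
    linarith
  · have : (0:ℝ) < 1/((n:ℝ)+1) := by positivity
    linarith
  · have h := tendsto_one_div_add_atTop_nhds_zero_nat (𝕜 := ℝ)
    have h2 := (tendsto_const_nhds (x := t) (f := (atTop : Filter ℕ))).sub h
    simpa using h2

lemma KS_sigmaPast_const_le (ℍ : Filtration ℝ m0) (t : ℝ) (ht : 0 ≤ t) :
    sigmaPast ℍ (fun _ => t) ≤ ℍ t := by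
  refine sup_le (ℍ.mono ht) (MeasurableSpace.generateFrom_le ?_)
  rintro s ⟨u, A, hA, rfl⟩
  by_cases hu : u < t
  · have h1 : {ω : Ω | u < (fun _ : Ω => t) ω} = Set.univ := by ext ω; simp [hu]
    rw [h1, Set.inter_univ]
    exact ℍ.mono hu.le _ hA
  · have h1 : {ω : Ω | u < (fun _ : Ω => t) ω} = ∅ := by ext ω; simp [hu]
    rw [h1, Set.inter_empty]
    exact @MeasurableSet.empty _ (ℍ t)

/-- If `g` is `mt`-measurable and `|g| * Y` is integrable, where `Y` is (a version of) the
conditional expectation of the nonnegative integrable `X` given `mt`, then `g * X` is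
integrable. -/
lemma KS_integrable_mul_of_condexp (P : Measure Ω) [IsProbabilityMeasure P]
    {mt : MeasurableSpace Ω} (hmt : mt ≤ m0)
    {X Y g : Ω → ℝ} (hXmeas : StronglyMeasurable[m0] X) (hXint : Integrable X P)
    (hXpos : ∀ ω, 0 ≤ X ω)
    (hY : P[X | mt] =ᵐ[P] Y) (hYpos : ∀ ω, 0 ≤ Y ω)
    (hg : StronglyMeasurable[mt] g)
    (hgY : Integrable (fun ω => |g ω| * Y ω) P) :
    Integrable (fun ω => g ω * X ω) P := by
  have hYint : Integrable Y P := integrable_condExp.congr hY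
  set h : ℕ → Ω → ℝ := fun n ω => min |g ω| n with hh
  have hh_meas : ∀ n, StronglyMeasurable[mt] (h n) := fun n =>
    (hg.measurable.abs.min measurable_const).stronglyMeasurable
  have hh_nonneg : ∀ n ω, 0 ≤ h n ω := fun n ω => le_min (abs_nonneg _) (n.cast_nonneg)
  have hh_le_abs : ∀ n ω, h n ω ≤ |g ω| := fun n ω => min_le_left _ _
  have hhX_int : ∀ n, Integrable (fun ω => h n ω * X ω) P := by
    intro n
    refine Integrable.mono (hXint.const_mul n) ?_ ?_
    · exact (((hh_meas n).mono hmt).aestronglyMeasurable).mul hXint.1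
    · refine Filter.Eventually.of_forall fun ω => ?_
      have h1 : |h n ω * X ω| = h n ω * X ω := abs_of_nonneg (mul_nonneg (hh_nonneg n ω) (hXpos ω))
      have h2 : h n ω ≤ (n : ℝ) := min_le_right _ _
      have h3 : |(n : ℝ) * X ω| = (n : ℝ) * X ω :=
        abs_of_nonneg (mul_nonneg n.cast_nonneg (hXpos ω))
      simp only [Real.norm_eq_abs, h1, h3]
      exact mul_le_mul_of_nonneg_right h2 (hXpos ω)
  have hhY_int : ∀ n, Integrable (fun ω => h n ω * Y ω) P := by
    intro n
    refine Integrable.mono hgY ?_ ?_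
    · exact (((hh_meas n).mono hmt).aestronglyMeasurable).mul hYint.1
    · refine Filter.Eventually.of_forall fun ω => ?_
      have h1 : |h n ω * Y ω| = h n ω * Y ω := abs_of_nonneg (mul_nonneg (hh_nonneg n ω) (hYpos ω))
      have h3 : |(|g ω| * Y ω)| = |g ω| * Y ω :=
        abs_of_nonneg (mul_nonneg (abs_nonneg _) (hYpos ω))
      simp only [Real.norm_eq_abs, h1, h3]
      exact mul_le_mul_of_nonneg_right (hh_le_abs n ω) (hYpos ω)
  haveI : SigmaFinite (P.trim hmt) := by infer_instance
  have hkey : ∀ n, ∫ ω, h n ω * X ω ∂P = ∫ ω, h n ω * Y ω ∂P := by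
    intro n
    have hpull : P[(fun ω => h n ω * X ω) | mt] =ᵐ[P] fun ω => h n ω * (P[X|mt]) ω := by
      have := condExp_mul_of_stronglyMeasurable_left (μ := P) (hh_meas n)
        (show Integrable (h n * X) P from hhX_int n) hXint
      exact this
    calc ∫ ω, h n ω * X ω ∂P = ∫ ω, (P[(fun ω => h n ω * X ω) | mt]) ω ∂P :=
          (integral_condExp hmt).symm
      _ = ∫ ω, h n ω * Y ω ∂P := by
          refine integral_congr_ae (hpull.trans ?_)
          filter_upwards [hY] with ω hω
          rw [hω]
  have hbound : ∀ n, ∫ ω, h n ω * Y ω ∂P ≤ ∫ ω, |g ω| * Y ω ∂P := by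
    intro n
    refine integral_mono (hhY_int n) hgY fun ω => ?_
    exact mul_le_mul_of_nonneg_right (hh_le_abs n ω) (hYpos ω)
  have hmeasgX : @AEStronglyMeasurable Ω ℝ _ m0 m0 (fun ω => g ω * X ω) P :=
    ((hg.mono hmt).mul hXmeas).aestronglyMeasurable
  refine ⟨hmeasgX, ?_⟩
  rw [hasFiniteIntegral_iff_norm]
  have heq : ∀ ω, ENNReal.ofReal ‖g ω * X ω‖ = ⨆ n, ENNReal.ofReal (h n ω * X ω) := by
    intro ω
    have hnorm : ‖g ω * X ω‖ = |g ω| * X ω := by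
      rw [Real.norm_eq_abs, abs_mul, abs_of_nonneg (hXpos ω)]
    rw [hnorm]
    refine le_antisymm ?_ (iSup_le fun n => ENNReal.ofReal_le_ofReal
      (mul_le_mul_of_nonneg_right (hh_le_abs n ω) (hXpos ω)))
    obtain ⟨n, hn⟩ := exists_nat_ge |g ω|
    refine le_iSup_of_le n (le_of_eq ?_)
    rw [hh]
    simp only [min_eq_left hn]
  simp only [heq]
  rw [lintegral_iSup]
  · refine lt_of_le_of_lt (iSup_le fun n => ?_) (ENNReal.ofReal_lt_top (r := ∫ ω, |g ω| * Y ω ∂P))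
    rw [← ofReal_integral_eq_lintegral_ofReal (hhX_int n)
      (Filter.Eventually.of_forall fun ω => mul_nonneg (hh_nonneg n ω) (hXpos ω))]
    rw [hkey n]
    exact ENNReal.ofReal_le_ofReal (hbound n)
  · intro n
    exact ((((hh_meas n).mono hmt).measurable).mul hXmeas.measurable).ennreal_ofReal
  · intro n m hnm ω
    refine ENNReal.ofReal_le_ofReal (mul_le_mul_of_nonneg_right ?_ (hXpos ω))
    exact min_le_min le_rfl (Nat.cast_le.mpr hnm)

/-- Abstract Bayes formula. -/
lemma KS_bayes (P : Measure Ω) [IsProbabilityMeasure P]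
    {m mt : MeasurableSpace Ω} (hm : m ≤ mt) (hmt : mt ≤ m0)
    {LT Lt G : Ω → ℝ}
    (hLTmeas : StronglyMeasurable[m0] LT) (hLTpos : ∀ ω, 0 < LT ω) (hLTint : Integrable LT P)
    (hLt : P[LT | mt] =ᵐ[P] Lt) (hLtpos : ∀ ω, 0 < Lt ω)
    (hGmeas : StronglyMeasurable[mt] G)
    (hGLt : Integrable (fun ω => G ω * Lt ω) P) :
    (fun ω => ((P.withDensity fun ω' => ENNReal.ofReal (LT ω'))[G | m]) ω * (P[Lt | m]) ω)
      =ᵐ[P] P[fun ω => G ω * Lt ω | m] := by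
  have hm0 : m ≤ m0 := hm.trans hmt
  set μh := P.withDensity fun ω' => ENNReal.ofReal (LT ω') with hμh
  haveI : IsFiniteMeasure μh := isFiniteMeasure_withDensity_ofReal hLTint.2
  haveI : SigmaFinite (μh.trim hm0) := inferInstance
  haveI : SigmaFinite (P.trim hm0) := inferInstance
  haveI : SigmaFinite (P.trim hmt) := inferInstance
  have hρmeas : Measurable[m0] fun ω => (LT ω).toNNReal :=
    measurable_real_toNNReal.comp hLTmeas.measurable
  have hint_iff : ∀ φ : Ω → ℝ, Integrable φ μh ↔ Integrable (fun ω => φ ω * LT ω) P := by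
    intro φ
    rw [hμh, integrable_withDensity_iff hLTmeas.measurable.ennreal_ofReal
      (Filter.Eventually.of_forall fun ω => ENNReal.ofReal_lt_top)]
    have heq : (fun x => φ x * (ENNReal.ofReal (LT x)).toReal) = fun x => φ x * LT x :=
      funext fun x => by rw [ENNReal.toReal_ofReal (hLTpos x).le]
    rw [heq]
  have hsetint : ∀ (φ : Ω → ℝ) (A : Set Ω), MeasurableSet[m0] A →
      ∫ ω in A, φ ω ∂μh = ∫ ω in A, φ ω * LT ω ∂P := by
    intro φ A hA
    have h1 : μh = P.withDensity fun ω => ((LT ω).toNNReal : ℝ≥0∞) := rfl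
    have h2 := @setIntegral_withDensity_eq_setIntegral_smul Ω ℝ m0 P _ _ _ hρmeas φ A hA
    rw [h1, h2]
    refine integral_congr_ae (Filter.Eventually.of_forall fun ω => ?_)
    show (LT ω).toNNReal • φ ω = φ ω * LT ω
    rw [NNReal.smul_def, Real.coe_toNNReal _ (hLTpos ω).le, smul_eq_mul, mul_comm]
  have hGLT_int : Integrable (fun ω => G ω * LT ω) P := by
    refine KS_integrable_mul_of_condexp (m0 := m0) P hmt hLTmeas hLTint (fun ω => (hLTpos ω).le)
      hLt (fun ω => (hLtpos ω).le) hGmeas ?_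
    refine hGLt.abs.congr (Filter.Eventually.of_forall fun ω => ?_)
    show |G ω * Lt ω| = |G ω| * Lt ω
    rw [abs_mul, abs_of_nonneg (hLtpos ω).le]
  have hG_int_μh : Integrable G μh := (hint_iff G).mpr hGLT_int
  have hLt_int : Integrable Lt P := integrable_condExp.congr hLt
  set f : Ω → ℝ := μh[G | m] with hf
  set b : Ω → ℝ := P[Lt | m] with hb
  have hf_meas : StronglyMeasurable[m] f := stronglyMeasurable_condExp
  have hf_int_μh : Integrable f μh := integrable_condExp
  have hfLT_int : Integrable (fun ω => f ω * LT ω) P := (hint_iff f).mp hf_int_μh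
  have hpullf : P[fun ω => f ω * LT ω | mt] =ᵐ[P] fun ω => f ω * Lt ω := by
    have h1 := condExp_mul_of_stronglyMeasurable_left (μ := P) (m := mt) (hf_meas.mono hm)
      (show Integrable (f * LT) P from hfLT_int) hLTint
    refine h1.trans ?_
    filter_upwards [hLt] with ω hω
    show f ω * (P[LT|mt]) ω = f ω * Lt ω
    rw [hω]
  have hfLt_int : Integrable (fun ω => f ω * Lt ω) P := integrable_condExp.congr hpullf
  have hpullG : P[fun ω => G ω * LT ω | mt] =ᵐ[P] fun ω => G ω * Lt ω := by
    have h1 := condExp_mul_of_stronglyMeasurable_left (μ := P) (m := mt) hGmeas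
      (show Integrable (G * LT) P from hGLT_int) hLTint
    refine h1.trans ?_
    filter_upwards [hLt] with ω hω
    show G ω * (P[LT|mt]) ω = G ω * Lt ω
    rw [hω]
  have hpullm : P[fun ω => f ω * Lt ω | m] =ᵐ[P] fun ω => f ω * b ω := by
    have h1 := condExp_mul_of_stronglyMeasurable_left (μ := P) (m := m) hf_meas
      (show Integrable (f * Lt) P from hfLt_int) hLt_int
    exact h1
  have hfb_int : Integrable (fun ω => f ω * b ω) P := integrable_condExp.congr hpullm
  refine ae_eq_of_forall_setIntegral_eq_of_sigmaFinite' (μ := P) hm0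
    (fun s _ _ => hfb_int.restrict) (fun s _ _ => integrable_condExp.restrict)
    (fun A hAm _ => ?_) ?_ ?_
  · have hA0 : MeasurableSet[m0] A := hm0 _ hAm
    have hAt : MeasurableSet[mt] A := hm _ hAm
    calc ∫ ω in A, f ω * b ω ∂P
        = ∫ ω in A, (P[fun ω => f ω * Lt ω | m]) ω ∂P :=
          integral_congr_ae (hpullm.symm.filter_mono (ae_mono Measure.restrict_le_self))
      _ = ∫ ω in A, f ω * Lt ω ∂P := setIntegral_condExp hm0 hfLt_int hAm
      _ = ∫ ω in A, (P[fun ω => f ω * LT ω | mt]) ω ∂P :=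
          integral_congr_ae (hpullf.symm.filter_mono (ae_mono Measure.restrict_le_self))
      _ = ∫ ω in A, f ω * LT ω ∂P := setIntegral_condExp hmt hfLT_int hAt
      _ = ∫ ω in A, f ω ∂μh := (hsetint f A hA0).symm
      _ = ∫ ω in A, G ω ∂μh := setIntegral_condExp (μ := μh) hm0 hG_int_μh hAm
      _ = ∫ ω in A, G ω * LT ω ∂P := hsetint G A hA0
      _ = ∫ ω in A, (P[fun ω => G ω * LT ω | mt]) ω ∂P :=
          (setIntegral_condExp hmt hGLT_int hAt).symm
      _ = ∫ ω in A, G ω * Lt ω ∂P :=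
          integral_congr_ae (hpullG.filter_mono (ae_mono Measure.restrict_le_self))
      _ = ∫ ω in A, (P[fun ω => G ω * Lt ω | m]) ω ∂P :=
          (setIntegral_condExp hm0 hGLt hAm).symm
  · exact (hf_meas.mul stronglyMeasurable_condExp).aestronglyMeasurable
  · exact stronglyMeasurable_condExp.aestronglyMeasurable


/-- Kallianpur–Striebel formula for predictable projections:
`ᵖ̂׳ᶠˢ G_t = ᵖ׳ᶠˢ(G_t L_t) / ᵖ׳ᶠˢ(L_t)` where `L` is the density process of `P̂` w.r.t.
`P` and the projections on the right are taken under `P`. -/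
theorem kallianpur_striebel_predictable_projection
    (P : Measure Ω) [IsProbabilityMeasure P]
    (ℱ : Filtration ℝ m0) (T : ℝ) (hT : 0 < T)
    (ℱS : Filtration ℝ m0)
    (hFsubF : ∀ t : ℝ, (ℱS t : MeasurableSpace Ω) ≤ (ℱ t : MeasurableSpace Ω))
    -- the density process L of P̂ w.r.t. P:
    (L : ℝ → Ω → ℝ) (hLmart : MartingaleOn P ℱ T L)
    (hLpos : ∀ t ω, 0 < L t ω)
    (hLsq : ∀ t ∈ Set.Icc (0:ℝ) T, Integrable (fun ω => (L t ω) ^ 2) P)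
    (G : ℝ → Ω → ℝ) (hGadp : Adapted ℱ G)
    (hGL : ∀ t ∈ Set.Icc (0:ℝ) T, Integrable (fun ω => G t ω * L t ω) P)
    (Zhat ZGL ZL : ℝ → Ω → ℝ)
    (hZhat : IsPredProj (P.withDensity fun ω => ENNReal.ofReal (L T ω)) ℱS G Zhat)
    (hZGL : IsPredProj P ℱS (fun t ω => G t ω * L t ω) ZGL)
    (hZL : IsPredProj P ℱS L ZL)
    (hZLpos : ∀ t ∈ Set.Icc (0:ℝ) T, ∀ᵐ ω ∂P, 0 < ZL t ω) :
    ∀ t ∈ Set.Icc (0:ℝ) T,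
      ∀ᵐ ω ∂(P.withDensity fun ω => ENNReal.ofReal (L T ω)),
        Zhat t ω = ZGL t ω / ZL t ω := by
  intro t ht
  set μh := P.withDensity fun ω => ENNReal.ofReal (L T ω) with hμh
  have hTmem : T ∈ Set.Icc (0:ℝ) T := ⟨hT.le, le_rfl⟩
  have hLTsm : StronglyMeasurable[m0] (L T) := (hLmart.1 T hTmem).1.mono (ℱ.le T)
  have hLTint : Integrable (L T) P := (hLmart.1 T hTmem).2
  have hLt : P[L T | ℱ t] =ᵐ[P] L t := hLmart.2 t T ht.1 ht.2 le_rfl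
  have h𝒢 : sigmaPast ℱS (fun _ => t) ≤ ℱS t := KS_sigmaPast_const_le ℱS t ht.1
  have h𝒢ℱ : sigmaPast ℱS (fun _ => t) ≤ ℱ t := h𝒢.trans (hFsubF t)
  have hσ : IsPredStoppingTime ℱS (fun _ => t) := KS_isPredStoppingTime_const ℱS t
  have hBayes := KS_bayes (m0 := m0) P (m := sigmaPast ℱS fun _ => t) (mt := ℱ t)
    h𝒢ℱ (ℱ.le t) hLTsm (hLpos T) hLTint hLt (hLpos t) (hGadp t).stronglyMeasurable (hGL t ht)
  have hZhateq := hZhat.2 _ hσ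
  have hZGLeq := hZGL.2 _ hσ
  have hZLeq := hZL.2 _ hσ
  have hbpos : ∀ᵐ ω ∂P, 0 < (P[L t | sigmaPast ℱS fun _ => t]) ω := by
    filter_upwards [hZLpos t ht, hZLeq] with ω h1 h2
    have h2' : ZL t ω = (P[L t | sigmaPast ℱS fun _ => t]) ω := h2
    exact h2' ▸ h1
  have hmain : ∀ᵐ ω ∂P,
      (μh[G t | sigmaPast ℱS fun _ => t]) ω = ZGL t ω / ZL t ω := by
    filter_upwards [hBayes, hbpos, hZGLeq, hZLeq] with ω h1 h2 h3 h4
    have h1' : (μh[G t | sigmaPast ℱS fun _ => t]) ω * (P[L t | sigmaPast ℱS fun _ => t]) ω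
        = (P[fun ω => G t ω * L t ω | sigmaPast ℱS fun _ => t]) ω := h1
    have h3' : ZGL t ω = (P[fun ω => G t ω * L t ω | sigmaPast ℱS fun _ => t]) ω := h3
    have h4' : ZL t ω = (P[L t | sigmaPast ℱS fun _ => t]) ω := h4
    rw [h3', h4', ← h1', mul_div_assoc, div_self h2.ne', mul_one]
  have habs : ae μh ≤ ae P := (withDensity_absolutelyContinuous P _).ae_le
  filter_upwards [hZhateq, hmain.filter_mono habs] with ω h1 h2
  have h1' : Zhat t ω = (μh[G t | sigmaPast ℱS fun _ => t]) ω := h1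
  exact h1'.trans h2
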